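/- arXiv:1412.0409 — 2 statements merged into one kernel-verified Lean document; each statement's English description precedes it below -/
import Mathlib

section
/- Fix real numbers a, b with 0 ≤ a ≤ b. For ρ > 0 let B_ρ denote the hyperbolic ball of radius ρ centered at e^{ρ} i in the upper half-plane, and let ν_ρ(S) denote the hyperbolic area of a set S. Then, as ρ → ∞, the ratio ν_ρ({z ∈ B_ρ : a < log(Im z) < b}) / ν_ρ(B_ρ) converges to (2/π) ∫_a^b √(e^{−t} − e^{−2t}) dt. -/
/-! For `ρ ≥ 0` the ball `hypBall ρ` is the region `x² < (y - 1)(e^{2ρ} - y)`, so by Fubini its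
horizontal slice at height `y` contributes hyperbolic area density `2√((y - 1)(e^{2ρ} - y)) / y²`.
Divided by `e^ρ`, this density converges to `2√(y - 1) / y²` and is dominated by it; the limit has
total integral `π` (primitive `2 (arctan √(y - 1) - √(y - 1) / y)`). Dominated convergence applied
to numerator and denominator, and the substitution `y = e^t`, give the limit. -/

open Complex Metric Set MeasureTheory Filter

/-- The hyperbolic area measure on the upper half-plane: density `(Im z)⁻²`
against two-dimensional Lebesgue measure on `ℂ`. -/
noncomputable def hypArea : Measure ℂ :=
  volume.withDensity (fun z => ENNReal.ofReal (1 / z.im ^ 2))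

/-- The hyperbolic ball of radius `ρ` centered at `e^ρ i` in the upper half-plane,
with the hyperbolic distance `dist z w = 2 arsinh(|z-w| / (2 √(Im z · Im w)))`. -/
noncomputable def hypBall (ρ : ℝ) : Set ℂ :=
  {z : ℂ | 0 < z.im ∧
    2 * Real.arsinh (‖z - Real.exp ρ * Complex.I‖ /
      (2 * Real.sqrt (z.im * Real.exp ρ))) < ρ}

open scoped Real Topology

lemma two_arsinh_lt_iff {u ρ : ℝ} (hu : 0 ≤ u) (hρ : 0 ≤ ρ) :
    2 * Real.arsinh u < ρ ↔ u ^ 2 < Real.sinh (ρ / 2) ^ 2 := by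
  have hs : 0 ≤ Real.sinh (ρ / 2) := Real.sinh_nonneg_iff.2 (by linarith)
  rw [← lt_div_iff₀' two_pos, ← Real.sinh_lt_sinh, Real.sinh_arsinh]
  exact (pow_lt_pow_iff_left₀ hu hs two_ne_zero).symm

lemma four_exp_mul_sinh_half_sq (ρ : ℝ) :
    4 * Real.exp ρ * Real.sinh (ρ / 2) ^ 2 = (Real.exp ρ - 1) ^ 2 := by
  have h : Real.exp ρ = Real.exp (ρ / 2) ^ 2 := by rw [← Real.exp_nat_mul]; ring_nf
  rw [Real.sinh_eq, h, Real.exp_neg]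
  field_simp
  ring

lemma hypBall_eq_setOf {ρ : ℝ} (hρ : 0 ≤ ρ) :
    hypBall ρ = {z : ℂ | z.re ^ 2 < (z.im - 1) * (Real.exp (2 * ρ) - z.im)} := by
  have hE : Real.exp (2 * ρ) = Real.exp ρ ^ 2 := by rw [← Real.exp_nat_mul]; ring_nf
  ext z
  have hnorm : ‖z - Real.exp ρ * I‖ ^ 2 = z.re ^ 2 + (z.im - Real.exp ρ) ^ 2 := by
    rw [Complex.sq_norm, Complex.normSq_apply]
    simp only [sub_re, sub_im, mul_re, mul_im, ofReal_re, ofReal_im, I_re, I_im]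
    ring
  have hsinh : Real.sinh (ρ / 2) ^ 2 * (2 ^ 2 * (z.im * Real.exp ρ)) =
      z.im * (Real.exp ρ - 1) ^ 2 := by
    linear_combination z.im * four_exp_mul_sinh_half_sq ρ
  have hball_iff (hy : 0 < z.im) :
      2 * Real.arsinh (‖z - Real.exp ρ * I‖ / (2 * √(z.im * Real.exp ρ))) < ρ ↔
        z.re ^ 2 < (z.im - 1) * (Real.exp (2 * ρ) - z.im) := by
    rw [two_arsinh_lt_iff (by positivity) hρ, div_pow, mul_pow, Real.sq_sqrt (by positivity),
      div_lt_iff₀ (by positivity), hnorm, hsinh, hE]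
    constructor <;> intro h <;> linarith
  have im_pos (h : z.re ^ 2 < (z.im - 1) * (Real.exp (2 * ρ) - z.im)) : 0 < z.im := by
    by_contra! hy
    nlinarith [sq_nonneg z.re]
  exact ⟨fun h => (hball_iff h.1).1 h.2, fun h => ⟨im_pos h, (hball_iff (im_pos h)).2 h⟩⟩

lemma volume_setOf_sq_lt (c : ℝ) : volume {x : ℝ | x ^ 2 < c} = ENNReal.ofReal (2 * √c) := by
  simp_rw [Real.sq_lt]
  rw [show {x : ℝ | -√c < x ∧ x < √c} = Ioo (-√c) √c from rfl, Real.volume_Ioo]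
  ring_nf

lemma hypArea_setOf_im_mem_re_sq_lt {T : Set ℝ} (hT : MeasurableSet T) {g : ℝ → ℝ}
    (hg : Measurable g) :
    hypArea {z : ℂ | z.im ∈ T ∧ z.re ^ 2 < g z.im} =
      ∫⁻ y in T, ENNReal.ofReal (2 * √(g y) / y ^ 2) := by
  set S := {z : ℂ | z.im ∈ T ∧ z.re ^ 2 < g z.im}
  have hS : MeasurableSet S :=
    (measurable_im hT).inter (measurableSet_lt (by fun_prop) (hg.comp measurable_im))
  have hmeas : Measurable (S.indicator fun z => ENNReal.ofReal (1 / z.im ^ 2)) :=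
    (by fun_prop : Measurable fun z : ℂ => ENNReal.ofReal (1 / z.im ^ 2)).indicator hS
  rw [hypArea, withDensity_apply _ hS, ← lintegral_indicator hS,
    ← (volume_preserving_equiv_real_prod.symm).lintegral_comp hmeas, Measure.volume_eq_prod,
    lintegral_prod_symm' (fun p => S.indicator _ (measurableEquivRealProd.symm p))
      (hmeas.comp (MeasurableEquiv.measurable _)), ← lintegral_indicator hT]
  congr 1 with y
  by_cases hy : y ∈ T
  · have hfiber (x : ℝ) : S.indicator (fun z => ENNReal.ofReal (1 / z.im ^ 2))
        (measurableEquivRealProd.symm (x, y)) =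
        {x : ℝ | x ^ 2 < g y}.indicator (fun _ => ENNReal.ofReal (1 / y ^ 2)) x := by
      simp [S, indicator, hy]
    simp_rw [hfiber]
    rw [lintegral_indicator_const (measurableSet_lt (by fun_prop) measurable_const),
      volume_setOf_sq_lt, indicator_of_mem hy, ← ENNReal.ofReal_mul (by positivity)]
    ring_nf
  · simp [S, indicator, hy]

/-- `e^{-ρ}` times the area density of the slice of `hypBall ρ` at height `y`. Since `√` is `0` on
negative numbers, it vanishes off `[1, e^{2ρ}]`, where the slice is empty. -/
noncomputable def sliceDensity (ρ y : ℝ) : ℝ :=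
  2 * √((y - 1) * (1 - y * Real.exp (-(2 * ρ)))) / y ^ 2

noncomputable def limitDensity (y : ℝ) : ℝ := 2 * √(y - 1) / y ^ 2

noncomputable def limitDensityPrimitive (y : ℝ) : ℝ :=
  2 * (Real.arctan √(y - 1) - √(y - 1) / y)

lemma hasDerivAt_limitDensityPrimitive {y : ℝ} (hy : 1 < y) :
    HasDerivAt limitDensityPrimitive (limitDensity y) y := by
  have hs : √(y - 1) ≠ 0 := (Real.sqrt_pos.2 (by linarith)).ne'
  have hy0 : y ≠ 0 := by positivity
  have hsqrt : HasDerivAt (fun x => √(x - 1)) (1 / (2 * √(y - 1))) y :=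
    ((hasDerivAt_id' y).sub_const 1).sqrt (sub_ne_zero.2 hy.ne')
  have h : HasDerivAt limitDensityPrimitive _ y :=
    (hsqrt.arctan.sub (hsqrt.div (hasDerivAt_id' y) (by positivity))).const_mul 2
  convert h using 1
  have hs2 : √(y - 1) ^ 2 = y - 1 := Real.sq_sqrt (by linarith)
  rw [limitDensity, hs2, add_sub_cancel]
  field_simp
  rw [hs2]
  ring

lemma continuousWithinAt_limitDensityPrimitive :
    ContinuousWithinAt limitDensityPrimitive (Ici 1) 1 := by
  unfold limitDensityPrimitive
  fun_prop (disch := norm_num)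

lemma tendsto_limitDensityPrimitive_atTop : Tendsto limitDensityPrimitive atTop (𝓝 π) := by
  have hsqrt : Tendsto (fun y : ℝ => √(y - 1)) atTop atTop :=
    Real.tendsto_sqrt_atTop.comp (tendsto_atTop_add_const_right _ (-1) tendsto_id)
  have harctan : Tendsto (fun y : ℝ => Real.arctan √(y - 1)) atTop (𝓝 (π / 2)) :=
    (Real.tendsto_arctan_atTop.mono_right nhdsWithin_le_nhds).comp hsqrt
  have hratio : Tendsto (fun y : ℝ => √(y - 1) / y) atTop (𝓝 0) := by
    refine squeeze_zero' ?_ ?_ (tendsto_inv_atTop_zero.comp Real.tendsto_sqrt_atTop) <;>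
      filter_upwards [eventually_gt_atTop 0] with y hy
    · positivity
    · exact (div_le_div_of_nonneg_right (Real.sqrt_le_sqrt (by linarith)) hy.le).trans_eq
        (Real.sqrt_div_self'.trans (one_div _))
  have h := (harctan.sub hratio).const_mul 2
  rwa [sub_zero, mul_div_cancel₀ π two_ne_zero] at h

lemma limitDensity_eq_zero {y : ℝ} (hy : y ≤ 1) : limitDensity y = 0 := by
  simp [limitDensity, Real.sqrt_eq_zero'.2 (sub_nonpos.2 hy)]

lemma limitDensity_nonneg (y : ℝ) : 0 ≤ limitDensity y := by
  unfold limitDensity; positivity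

lemma integrable_limitDensity : Integrable limitDensity :=
  (integrableOn_Ioi_deriv_of_nonneg continuousWithinAt_limitDensityPrimitive
    (fun _ hy => hasDerivAt_limitDensityPrimitive hy) (fun y _ => limitDensity_nonneg y)
    tendsto_limitDensityPrimitive_atTop).integrable_of_forall_notMem_eq_zero
    fun _ hy => limitDensity_eq_zero (not_lt.1 hy)

lemma integral_limitDensity : ∫ y, limitDensity y = π := by
  rw [← setIntegral_eq_integral_of_forall_compl_eq_zero (s := Ioi 1)
    fun _ hy => limitDensity_eq_zero (not_lt.1 hy),
    integral_Ioi_of_hasDerivAt_of_nonneg continuousWithinAt_limitDensityPrimitive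
    (fun _ hy => hasDerivAt_limitDensityPrimitive hy) (fun y _ => limitDensity_nonneg y)
    tendsto_limitDensityPrimitive_atTop]
  simp [limitDensityPrimitive]

lemma exp_mul_sliceDensity (ρ y : ℝ) :
    Real.exp ρ * sliceDensity ρ y = 2 * √((y - 1) * (Real.exp (2 * ρ) - y)) / y ^ 2 := by
  have hexp : Real.exp (2 * ρ) = Real.exp ρ ^ 2 := by rw [← Real.exp_nat_mul]; ring_nf
  have hinv : Real.exp (-(2 * ρ)) = (Real.exp ρ ^ 2)⁻¹ := by rw [Real.exp_neg, hexp]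
  have hfactor : (y - 1) * (Real.exp (2 * ρ) - y) =
      Real.exp ρ ^ 2 * ((y - 1) * (1 - y * Real.exp (-(2 * ρ)))) := by
    rw [hinv, hexp]; field_simp
  rw [sliceDensity, hfactor, Real.sqrt_mul (sq_nonneg (Real.exp ρ)),
    Real.sqrt_sq (Real.exp_nonneg ρ)]
  ring

lemma sliceDensity_nonneg (ρ y : ℝ) : 0 ≤ sliceDensity ρ y := by
  unfold sliceDensity; positivity

lemma measurable_sliceDensity (ρ : ℝ) : Measurable (sliceDensity ρ) := by
  unfold sliceDensity; fun_prop

lemma norm_sliceDensity_le {ρ : ℝ} (hρ : 0 ≤ ρ) (y : ℝ) :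
    ‖sliceDensity ρ y‖ ≤ limitDensity y := by
  rw [Real.norm_of_nonneg (sliceDensity_nonneg ρ y)]
  rcases le_or_gt y 1 with hy | hy
  · have hε : Real.exp (-(2 * ρ)) ≤ 1 := Real.exp_le_one_iff.2 (by linarith)
    have hneg : (y - 1) * (1 - y * Real.exp (-(2 * ρ))) ≤ 0 :=
      mul_nonpos_of_nonpos_of_nonneg (by linarith) (by nlinarith [Real.exp_pos (-(2 * ρ))])
    simp [sliceDensity, Real.sqrt_eq_zero'.2 hneg, limitDensity_nonneg]
  · unfold sliceDensity limitDensity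
    gcongr
    nlinarith [mul_nonneg (mul_nonneg (sub_nonneg.2 hy.le) (by linarith : (0:ℝ) ≤ y))
      (Real.exp_nonneg (-(2 * ρ)))]

lemma tendsto_sliceDensity (y : ℝ) :
    Tendsto (fun ρ => sliceDensity ρ y) atTop (𝓝 (limitDensity y)) := by
  have hε : Tendsto (fun ρ : ℝ => Real.exp (-(2 * ρ))) atTop (𝓝 0) :=
    Real.tendsto_exp_atBot.comp (tendsto_neg_atTop_atBot.comp
      (tendsto_id.const_mul_atTop two_pos))
  have hcont : Continuous fun ε : ℝ => 2 * √((y - 1) * (1 - y * ε)) / y ^ 2 := by fun_prop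
  have h := (hcont.tendsto 0).comp hε
  rwa [mul_zero, sub_zero, mul_one] at h

lemma tendsto_setIntegral_sliceDensity (T : Set ℝ) :
    Tendsto (fun ρ => ∫ y in T, sliceDensity ρ y) atTop (𝓝 (∫ y in T, limitDensity y)) :=
  tendsto_integral_filter_of_dominated_convergence limitDensity
    (Eventually.of_forall fun ρ => (measurable_sliceDensity ρ).aestronglyMeasurable)
    ((eventually_ge_atTop 0).mono fun _ hρ => ae_of_all _ (norm_sliceDensity_le hρ))
    integrable_limitDensity.integrableOn (ae_of_all _ tendsto_sliceDensity)

lemma limitDensity_exp_mul_exp (t : ℝ) :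
    limitDensity (Real.exp t) * Real.exp t = 2 * √(Real.exp (-t) - Real.exp (-2 * t)) := by
  have h : Real.exp (-t) - Real.exp (-2 * t) = (Real.exp t - 1) * Real.exp (-t) ^ 2 := by
    have hsq : Real.exp (-2 * t) = Real.exp (-t) ^ 2 := by rw [← Real.exp_nat_mul]; ring_nf
    have hinv : Real.exp t * Real.exp (-t) = 1 := by rw [← Real.exp_add]; simp
    linear_combination -hsq - Real.exp (-t) * hinv
  rw [h, Real.sqrt_mul' _ (sq_nonneg _), Real.sqrt_sq (Real.exp_nonneg _), limitDensity,
    Real.exp_neg]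
  field_simp

lemma continuousOn_limitDensity : ContinuousOn limitDensity (Ioi 0) := by
  unfold limitDensity
  exact ContinuousOn.div (by fun_prop) (by fun_prop) fun y hy => pow_ne_zero 2 (ne_of_gt hy)

lemma intervalIntegral_limitDensity_exp (a b : ℝ) :
    ∫ y in Real.exp a..Real.exp b, limitDensity y =
      2 * ∫ t in a..b, √(Real.exp (-t) - Real.exp (-2 * t)) := by
  rw [← intervalIntegral.integral_const_mul, ← intervalIntegral.integral_comp_mul_deriv'
    (fun t _ => Real.hasDerivAt_exp t) Real.continuous_exp.continuousOn
    (continuousOn_limitDensity.mono (image_subset_iff.2 fun t _ => Real.exp_pos t))]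
  simp_rw [Function.comp_apply, limitDensity_exp_mul_exp]

lemma toReal_hypArea_hypBall_inter_preimage_im {ρ : ℝ} (hρ : 0 ≤ ρ) {T : Set ℝ}
    (hT : MeasurableSet T) :
    (hypArea (hypBall ρ ∩ im ⁻¹' T)).toReal = Real.exp ρ * ∫ y in T, sliceDensity ρ y := by
  have hset : hypBall ρ ∩ im ⁻¹' T =
      {z : ℂ | z.im ∈ T ∧ z.re ^ 2 < (z.im - 1) * (Real.exp (2 * ρ) - z.im)} := by
    rw [hypBall_eq_setOf hρ]
    exact inter_comm _ _
  rw [hset, hypArea_setOf_im_mem_re_sq_lt hT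
    (g := fun y => (y - 1) * (Real.exp (2 * ρ) - y)) (by fun_prop), ← integral_const_mul,
    integral_eq_lintegral_of_nonneg_ae
      (ae_of_all _ fun y => mul_nonneg (Real.exp_nonneg ρ) (sliceDensity_nonneg ρ y))
      ((measurable_sliceDensity ρ).const_mul _).aestronglyMeasurable]
  simp_rw [exp_mul_sliceDensity]

lemma sep_hypBall_log_im (ρ a b : ℝ) :
    {z ∈ hypBall ρ | a < Real.log z.im ∧ Real.log z.im < b} =
      hypBall ρ ∩ im ⁻¹' Ioo (Real.exp a) (Real.exp b) := by
  ext z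
  refine and_congr_right fun hz => ?_
  rw [mem_preimage, mem_Ioo, Real.lt_log_iff_exp_lt hz.1, Real.log_lt_iff_lt_exp hz.1]

theorem slice_ratio_tendsto_general (a b : ℝ) (hab : a ≤ b) :
    Tendsto
      (fun ρ : ℝ =>
        (hypArea {z ∈ hypBall ρ | a < Real.log z.im ∧ Real.log z.im < b}).toReal /
          (hypArea (hypBall ρ)).toReal)
      atTop
      (nhds ((2 / Real.pi) * ∫ t in a..b,
        Real.sqrt (Real.exp (-t) - Real.exp (-2 * t)))) := by
  have hnum := tendsto_setIntegral_sliceDensity (Ioo (Real.exp a) (Real.exp b))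
  rw [← integral_Ioc_eq_integral_Ioo, ← intervalIntegral.integral_of_le (Real.exp_le_exp.2 hab),
    intervalIntegral_limitDensity_exp] at hnum
  have hden := tendsto_setIntegral_sliceDensity univ
  simp_rw [Measure.restrict_univ, integral_limitDensity] at hden
  rw [div_mul_eq_mul_div]
  refine (hnum.div hden Real.pi_ne_zero).congr' ?_
  filter_upwards [eventually_ge_atTop 0] with ρ hρ
  have hball := toReal_hypArea_hypBall_inter_preimage_im hρ MeasurableSet.univ
  rw [preimage_univ, inter_univ, setIntegral_univ] at hball
  rw [Pi.div_apply, sep_hypBall_log_im,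
    toReal_hypArea_hypBall_inter_preimage_im hρ measurableSet_Ioo, hball,
    mul_div_mul_left _ _ (Real.exp_pos ρ).ne']

theorem slice_ratio_tendsto (a b : ℝ) (ha : 0 ≤ a) (hab : a ≤ b) :
    Tendsto
      (fun ρ : ℝ =>
        (hypArea {z ∈ hypBall ρ | a < Real.log z.im ∧ Real.log z.im < b}).toReal /
          (hypArea (hypBall ρ)).toReal)
      atTop
      (nhds ((2 / Real.pi) * ∫ t in a..b,
        Real.sqrt (Real.exp (-t) - Real.exp (-2 * t)))) :=
  slice_ratio_tendsto_general a b hab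
end

section
/- Let 0 < R < R' < 1, A = 1/log(R'/R), and let φ_{R,R'} : ℂ → ℝ equal 1 on {|z| ≤ R}, equal A·log(R'/|z|) on {R ≤ |z| ≤ R'}, and equal 0 on {|z| ≥ R'}. Then for every C² function f : ℂ → ℝ on a neighborhood of the closed disk {|z| ≤ R'} and every constant C ≥ 0 with |f(z)| ≤ C for all |z| ≤ R', one has | ∫_𝔻 φ_{R,R'}(z) Δf(z) dLeb(z) | ≤ 4π A C. -/
/-!
Off the circles `‖z‖ = R` and `‖z‖ = R'` the function `φ = φ_{R,R'}` is smooth, with gradient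
`∇φ(z) = -A z / ‖z‖²` on the annulus and `0` elsewhere, so that
`φ Δf = ∂ₓ(φ ∂ₓf) + ∂ᵧ(φ ∂ᵧf) - ⟪∇φ, ∇f⟫`. As `φ` is continuous with compact support, each
divergence term integrates to zero along every line (the fundamental theorem of calculus allows
the finitely many points where the line crosses the circles), hence over the plane. In polar
coordinates `r ⟪∇φ, ∇f⟫ = -A ∂ᵣf` on the annulus, so
`∫ φ Δf = A ∫_{-π}^{π} (f(R' e^{iθ}) - f(R e^{iθ})) dθ`, which is at most `2π · A · 2C` in
absolute value.
-/

open Complex Metric Set MeasureTheory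

/-- The Euclidean Laplacian `∂²f/∂x² + ∂²f/∂y²` of a function `f : ℂ → ℝ`. -/
noncomputable def lap (f : ℂ → ℝ) (z : ℂ) : ℝ :=
  fderiv ℝ (fun w => fderiv ℝ f w 1) z 1 +
    fderiv ℝ (fun w => fderiv ℝ f w Complex.I) z Complex.I

/-- The function `φ_{R,R'}`: equal to `1` on `{|z| ≤ R}`, to `A log(R'/|z|)` on
`{R ≤ |z| ≤ R'}` (with `A = 1/log(R'/R)`), and to `0` on `{|z| ≥ R'}`. -/
noncomputable def phiRR (R R' : ℝ) (z : ℂ) : ℝ :=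
  if ‖z‖ ≤ R then 1
  else if ‖z‖ ≤ R' then (1 / Real.log (R' / R)) * Real.log (R' / ‖z‖)
  else 0

open scoped RealInnerProductSpace Real

open Polynomial in
theorem finite_setOf_norm_add_smul_eq {E : Type*} [NormedAddCommGroup E] [InnerProductSpace ℝ E]
    (x : E) {v : E} (hv : v ≠ 0) (c : ℝ) : {t : ℝ | ‖x + t • v‖ = c}.Finite := by
  let p : ℝ[X] := C (‖v‖ ^ 2) * X ^ 2 + C (2 * ⟪x, v⟫) * X + C (‖x‖ ^ 2 - c ^ 2)
  have hp : p.coeff 2 ≠ 0 := by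
    simp only [p, coeff_add, coeff_C_mul_X_pow, coeff_C_mul_X, coeff_C]
    norm_num [hv]
  refine (finite_setOfPred_isRoot (p := p) fun h => hp (by rw [h, coeff_zero])).subset
    fun t (ht : ‖x + t • v‖ = c) => ?_
  simp only [Set.mem_ofPred_eq, IsRoot, p, eval_add, eval_mul, eval_C, eval_pow, eval_X]
  rw [← ht, norm_add_sq_real, norm_smul, inner_smul_right, Real.norm_eq_abs, mul_pow, sq_abs]
  ring

theorem Complex.integral_eq_zero_of_hasDerivAt_add_ofReal {P P' : ℂ → ℝ} {S : Set ℂ}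
    (hS : ∀ z : ℂ, {t : ℝ | z + t ∈ S}.Countable) (hP : Continuous P)
    (hPc : HasCompactSupport P) (hP'c : HasCompactSupport P') (hP' : Integrable P')
    (hd : ∀ z ∉ S, HasDerivAt (fun t : ℝ => P (z + t)) (P' z) 0) :
    ∫ z, P' z = 0 := by
  obtain ⟨r₁, -, hP0⟩ := hPc.exists_pos_le_norm
  obtain ⟨r₂, hr₂, hP'0⟩ := hP'c.exists_pos_le_norm
  set r := max r₁ r₂
  have hr0 : -r ≤ r := neg_le_self (hr₂.le.trans (le_max_right _ _))
  have hr : ∀ x y : ℝ, r ≤ |x| → r₁ ≤ ‖(x : ℂ) + y * I‖ ∧ r₂ ≤ ‖(x : ℂ) + y * I‖ := by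
    intro x y hx
    have := (hx.trans (by simpa using abs_re_le_norm ((x : ℂ) + y * I)))
    exact ⟨(le_max_left _ _).trans this, (le_max_right _ _).trans this⟩
  have hline : ∀ y : ℝ, Integrable (fun x : ℝ => P' (x + y * I)) →
      ∫ x : ℝ, P' (x + y * I) = 0 := by
    intro y hy
    have hP'y : ∀ x ∉ Ioc (-r) r, P' (x + y * I) = 0 := by
      intro x hx
      refine hP'0 _ (hr x y ?_).2
      rw [mem_Ioc, not_and_or, not_lt, not_le] at hx
      rcases hx with hx | hx
      · exact le_abs.2 (Or.inr (by linarith))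
      · exact le_abs.2 (Or.inl hx.le)
    have hd' : ∀ x ∈ Ioo (-r) r \ {t : ℝ | y * I + t ∈ S},
        HasDerivAt (fun t : ℝ => P (t + y * I)) (P' (x + y * I)) x := by
      rintro x ⟨-, hx⟩
      have h : HasDerivAt (fun t : ℝ => P (x + y * I + t)) (P' (x + y * I)) (x - x) := by
        rw [sub_self]; exact hd _ (by simpa [add_comm] using hx)
      refine (h.comp_sub_const x x).congr_of_eventuallyEq (.of_forall fun t => ?_)
      simp only [ofReal_sub]
      ring_nf
    rw [← setIntegral_eq_integral_of_forall_compl_eq_zero hP'y,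
      ← intervalIntegral.integral_of_le hr0,
      integral_eq_of_hasDerivAt_off_countable_of_le _ _ hr0 (hS (y * I))
        (by fun_prop) hd' hy.intervalIntegrable,
      hP0 _ (hr r y (le_abs_self r)).1, hP0 _ (hr (-r) y (by simp [le_abs_self])).1, sub_zero]
  have hmp := Complex.volume_preserving_equiv_real_prod.symm
  have hint := (hmp.integrable_comp_emb (MeasurableEquiv.measurableEmbedding _)).2 hP'
  rw [Measure.volume_eq_prod] at hint
  calc ∫ z, P' z = ∫ p, (P' ∘ measurableEquivRealProd.symm) p ∂(volume.prod volume) := by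
        rw [← Measure.volume_eq_prod]
        exact (hmp.integral_comp (MeasurableEquiv.measurableEmbedding _) P').symm
    _ = ∫ y, ∫ x, (P' ∘ measurableEquivRealProd.symm) (x, y) := integral_prod_symm _ hint
    _ = 0 := integral_eq_zero_of_ae ?_
  filter_upwards [hint.prod_left_ae] with y hy
  simpa [Complex.mk_eq_add_mul_I] using hline y (by simpa [Complex.mk_eq_add_mul_I] using hy)

theorem Complex.integral_eq_zero_of_hasDerivAt_add_smul {P P' : ℂ → ℝ} {S : Set ℂ} {u : ℂ}
    (hu : ‖u‖ = 1) (hS : ∀ z : ℂ, {t : ℝ | z + t • u ∈ S}.Countable) (hP : Continuous P)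
    (hPc : HasCompactSupport P) (hP'c : HasCompactSupport P') (hP' : Integrable P')
    (hd : ∀ z ∉ S, HasDerivAt (fun t : ℝ => P (z + t • u)) (P' z) 0) :
    ∫ z, P' z = 0 := by
  let e := rotation ⟨u, mem_sphere_zero_iff_norm.2 hu⟩
  have he : ∀ z : ℂ, e z = u * z := fun z => rotation_apply _ z
  have hline : ∀ (z : ℂ) (t : ℝ), e (z + t) = e z + t • u := fun z t => by
    simp only [he, real_smul]; ring
  have hemb := e.toHomeomorph.measurableEmbedding
  rw [← e.measurePreserving.integral_comp hemb]
  refine integral_eq_zero_of_hasDerivAt_add_ofReal (P := P ∘ e) (S := e ⁻¹' S)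
    (fun z => by simpa only [mem_preimage, hline] using hS (e z)) (hP.comp e.continuous)
    (hPc.comp_homeomorph e.toHomeomorph) (hP'c.comp_homeomorph e.toHomeomorph)
    ((e.measurePreserving.integrable_comp_emb hemb).2 hP') fun z hz => ?_
  simpa only [Function.comp_def, hline] using hd (e z) hz

theorem Complex.norm_ofReal_mul_exp_mul_I {r : ℝ} (hr : 0 ≤ r) (θ : ℝ) :
    ‖(r : ℂ) * exp (θ * I)‖ = r := by
  rw [norm_mul, norm_exp_ofReal_mul_I, mul_one, norm_real, Real.norm_of_nonneg hr]

theorem ContDiffAt.fderiv_apply {𝕜 E F : Type*} [NontriviallyNormedField 𝕜]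
    [NormedAddCommGroup E] [NormedSpace 𝕜 E] [NormedAddCommGroup F] [NormedSpace 𝕜 F]
    {f : E → F} {x : E} {m n : WithTop ℕ∞} (hf : ContDiffAt 𝕜 n f x) (hmn : m + 1 ≤ n) (v : E) :
    ContDiffAt 𝕜 m (fun y => fderiv 𝕜 f y v) x :=
  (hf.fderiv_right hmn).clm_apply contDiffAt_const

theorem Complex.inner_one_mul_add_inner_I_mul (L : ℂ →L[ℝ] ℝ) (g : ℂ) :
    ⟪g, 1⟫ * L 1 + ⟪g, I⟫ * L I = L g :=
  calc _ = L (g.re • (1 : ℂ) + g.im • I) := by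
        rw [map_add, map_smul, map_smul]; simp [Complex.inner]
    _ = L g := by congr 1; simp

noncomputable def gradPhiRR (R R' : ℝ) (z : ℂ) : ℂ :=
  if R < ‖z‖ ∧ ‖z‖ < R' then (-(1 / Real.log (R' / R)) / ‖z‖ ^ 2) • z else 0

section PhiRR

variable {R R' : ℝ}

theorem phiRR_of_norm_le {z : ℂ} (h : ‖z‖ ≤ R) : phiRR R R' z = 1 := if_pos h

theorem phiRR_of_lt_norm_of_norm_le {z : ℂ} (h₁ : R < ‖z‖) (h₂ : ‖z‖ ≤ R') :
    phiRR R R' z = 1 / Real.log (R' / R) * Real.log (R' / ‖z‖) := by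
  rw [phiRR, if_neg h₁.not_ge, if_pos h₂]

theorem phiRR_of_le_norm (hRR' : R < R') {z : ℂ} (h : R' ≤ ‖z‖) : phiRR R R' z = 0 := by
  rcases h.eq_or_lt with h | h
  · rw [phiRR_of_lt_norm_of_norm_le (hRR'.trans_eq h) h.ge, ← h]
    rcases eq_or_ne R' 0 with h0 | h0 <;> simp [h0]
  · rw [phiRR, if_neg (by linarith), if_neg h.not_ge]

theorem phiRR_eq_max (hR : 0 < R) (hRR' : R < R') (z : ℂ) :
    phiRR R R' z = max (1 / Real.log (R' / R) * Real.log (R' / max ‖z‖ R)) 0 := by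
  have hL : 0 < Real.log (R' / R) := Real.log_pos ((one_lt_div hR).2 hRR')
  have hA : 0 ≤ 1 / Real.log (R' / R) := (one_div_pos.2 hL).le
  rcases le_or_gt ‖z‖ R with h₁ | h₁
  · rw [phiRR_of_norm_le h₁, max_eq_right h₁, one_div_mul_cancel hL.ne', max_eq_left zero_le_one]
  rw [max_eq_left h₁.le]
  rcases le_or_gt ‖z‖ R' with h₂ | h₂
  · rw [phiRR_of_lt_norm_of_norm_le h₁ h₂, max_eq_left]
    exact mul_nonneg hA (Real.log_nonneg ((one_le_div (hR.trans h₁)).2 h₂))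
  · rw [phiRR_of_le_norm hRR' h₂.le, max_eq_right]
    exact mul_nonpos_of_nonneg_of_nonpos hA
      (Real.log_nonpos (div_pos (hR.trans hRR') (hR.trans h₁)).le
        ((div_le_one (hR.trans h₁)).2 h₂.le))

theorem continuous_phiRR (hR : 0 < R) (hRR' : R < R') : Continuous (phiRR R R') := by
  rw [funext (phiRR_eq_max hR hRR')]
  have h₁ : ∀ z : ℂ, max ‖z‖ R ≠ 0 := fun z => (hR.trans_le (le_max_right _ _)).ne'
  have h₂ : ∀ z : ℂ, R' / max ‖z‖ R ≠ 0 := fun z => div_ne_zero (hR.trans hRR').ne' (h₁ z)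
  fun_prop (disch := assumption)

theorem hasCompactSupport_phiRR (hRR' : R < R') : HasCompactSupport (phiRR R R') :=
  HasCompactSupport.intro (isCompact_closedBall (0 : ℂ) R') fun _ hz =>
    phiRR_of_le_norm hRR' (not_le.1 (mt mem_closedBall_zero_iff.2 hz)).le

theorem gradPhiRR_of_le_norm {z : ℂ} (h : R' ≤ ‖z‖) : gradPhiRR R R' z = 0 :=
  if_neg fun h' => h'.2.not_ge h

theorem measurable_gradPhiRR : Measurable (gradPhiRR R R') :=
  Measurable.ite (measurableSet_lt measurable_const measurable_norm |>.inter
    (measurableSet_lt measurable_norm measurable_const)) (by fun_prop) measurable_const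

theorem norm_gradPhiRR_le (hR : 0 < R) (hRR' : R < R') (z : ℂ) :
    ‖gradPhiRR R R' z‖ ≤ 1 / Real.log (R' / R) / R := by
  have hA : 0 ≤ 1 / Real.log (R' / R) := one_div_nonneg.2 (Real.log_pos ((one_lt_div hR).2 hRR')).le
  unfold gradPhiRR
  split_ifs with h
  · have hz : 0 < ‖z‖ := hR.trans h.1
    rw [norm_smul, Real.norm_eq_abs, abs_div, abs_neg, abs_of_nonneg hA, abs_of_pos (by positivity),
      div_mul_eq_mul_div, pow_two, mul_div_mul_right _ _ hz.ne']
    exact div_le_div_of_nonneg_left hA hR h.1.le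
  · rw [norm_zero]; positivity

theorem hasFDerivAt_phiRR (hR : 0 < R) (hRR' : R < R') {z : ℂ} (h₁ : ‖z‖ ≠ R) (h₂ : ‖z‖ ≠ R') :
    HasFDerivAt (phiRR R R') (innerSL ℝ (gradPhiRR R R' z)) z := by
  rcases h₁.lt_or_gt with h₁ | h₁
  · have hφ : phiRR R R' =ᶠ[nhds z] fun _ => 1 := by
      filter_upwards [(isOpen_lt continuous_norm continuous_const).mem_nhds h₁] with w hw
      exact phiRR_of_norm_le hw.le
    rw [gradPhiRR, if_neg (fun h => h.1.not_gt h₁), map_zero]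
    exact (hasFDerivAt_const _ _).congr_of_eventuallyEq hφ
  rcases h₂.lt_or_gt with h₂ | h₂
  · have hz : 0 < ‖z‖ := hR.trans h₁
    have hφ : phiRR R R' =ᶠ[nhds z]
        fun w => 1 / Real.log (R' / R) * (Real.log R' - 2⁻¹ * Real.log (‖w‖ ^ 2)) := by
      filter_upwards [(isOpen_lt continuous_const continuous_norm).mem_nhds h₁,
        (isOpen_lt continuous_norm continuous_const).mem_nhds h₂] with w hw₁ hw₂
      rw [phiRR_of_lt_norm_of_norm_le hw₁ hw₂.le,
        Real.log_div (hR.trans hRR').ne' (hR.trans hw₁).ne', Real.log_pow]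
      ring
    have hlog := (hasStrictFDerivAt_norm_sq z).hasFDerivAt.log (by positivity)
    refine (((hlog.const_mul 2⁻¹).const_sub _).const_mul _).congr_of_eventuallyEq hφ
      |>.congr_fderiv ?_
    rw [gradPhiRR, if_pos ⟨h₁, h₂⟩, map_smul]
    module
  · have hφ : phiRR R R' =ᶠ[nhds z] fun _ => 0 := by
      filter_upwards [(isOpen_lt continuous_const continuous_norm).mem_nhds h₂] with w hw
      exact phiRR_of_le_norm hRR' hw.le
    rw [gradPhiRR_of_le_norm h₂.le, map_zero]
    exact (hasFDerivAt_const _ _).congr_of_eventuallyEq hφ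

end PhiRR

/-- The derivative along `u` of `φ_{R,R'} · ∂_u f`, at points off the circles `‖z‖ = R, R'`. -/
noncomputable def derivPhiRRMulFDeriv (R R' : ℝ) (f : ℂ → ℝ) (u z : ℂ) : ℝ :=
  ⟪gradPhiRR R R' z, u⟫ * fderiv ℝ f z u + phiRR R R' z * fderiv ℝ (fun w => fderiv ℝ f w u) z u

section Directional

variable {R R' : ℝ} {f : ℂ → ℝ}

theorem continuous_phiRR_mul (hR : 0 < R) (hRR' : R < R') {h : ℂ → ℝ}
    (hh : ∀ z ∈ closedBall (0 : ℂ) R', ContinuousAt h z) :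
    Continuous fun z => phiRR R R' z * h z := by
  refine continuous_iff_continuousAt.2 fun z => ?_
  rcases le_or_gt ‖z‖ R' with hz | hz
  · exact (continuous_phiRR hR hRR').continuousAt.mul (hh z (mem_closedBall_zero_iff.2 hz))
  · refine (continuousAt_const (y := 0)).congr ?_
    filter_upwards [(isOpen_lt continuous_const continuous_norm).mem_nhds hz] with w hw
    rw [phiRR_of_le_norm hRR' hw.le, zero_mul]

theorem integrable_inner_gradPhiRR_mul (hR : 0 < R) (hRR' : R < R') (u : ℂ) {h : ℂ → ℝ}
    (hh : ContinuousOn h (closedBall (0 : ℂ) R')) :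
    Integrable fun z => ⟪gradPhiRR R R' z, u⟫ * h z := by
  refine IntegrableOn.integrable_of_forall_notMem_eq_zero (s := closedBall (0 : ℂ) R') ?_
    fun z hz => ?_
  · refine IntegrableOn.mul_continuousOn ?_ hh (isCompact_closedBall _ _)
    refine Measure.integrableOn_of_bounded (M := 1 / Real.log (R' / R) / R * ‖u‖)
      measure_closedBall_lt_top.ne
      (measurable_gradPhiRR.inner measurable_const).aestronglyMeasurable (ae_of_all _ fun z => ?_)
    rw [Real.norm_eq_abs]
    exact (abs_real_inner_le_norm _ _).trans (by gcongr; exact norm_gradPhiRR_le hR hRR' z)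
  · rw [gradPhiRR_of_le_norm (not_le.1 (mt mem_closedBall_zero_iff.2 hz)).le, inner_zero_left,
      zero_mul]

theorem continuousOn_fderiv_apply {s : Set ℂ} (hf : ∀ z ∈ s, ContDiffAt ℝ 2 f z) (u : ℂ) :
    ContinuousOn (fun w => fderiv ℝ f w u) s :=
  fun _ hz => ((hf _ hz).fderiv_apply one_add_one_eq_two.le u).continuousAt.continuousWithinAt

theorem derivPhiRRMulFDeriv_of_le_norm (hRR' : R < R') (u : ℂ) {z : ℂ} (h : R' ≤ ‖z‖) :
    derivPhiRRMulFDeriv R R' f u z = 0 := by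
  rw [derivPhiRRMulFDeriv, gradPhiRR_of_le_norm h, phiRR_of_le_norm hRR' h, inner_zero_left,
    zero_mul, zero_mul, add_zero]

theorem hasCompactSupport_derivPhiRRMulFDeriv (hRR' : R < R') (u : ℂ) :
    HasCompactSupport (derivPhiRRMulFDeriv R R' f u) :=
  HasCompactSupport.intro (isCompact_closedBall (0 : ℂ) R') fun _ hz =>
    derivPhiRRMulFDeriv_of_le_norm hRR' u (not_le.1 (mt mem_closedBall_zero_iff.2 hz)).le

theorem integrable_derivPhiRRMulFDeriv (hR : 0 < R) (hRR' : R < R')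
    (hf : ∀ z ∈ closedBall (0 : ℂ) R', ContDiffAt ℝ 2 f z) (u : ℂ) :
    Integrable (derivPhiRRMulFDeriv R R' f u) :=
  (integrable_inner_gradPhiRR_mul hR hRR' u (continuousOn_fderiv_apply hf u)).add
    ((continuous_phiRR_mul hR hRR' fun _ hz =>
      (((hf _ hz).fderiv_apply one_add_one_eq_two.le u).continuousAt_fderiv one_ne_zero).clm_apply
        continuousAt_const).integrable_of_hasCompactSupport
      (hasCompactSupport_phiRR hRR').mul_right)

theorem hasDerivAt_phiRR_mul_fderiv (hR : 0 < R) (hRR' : R < R')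
    (hf : ∀ z ∈ closedBall (0 : ℂ) R', ContDiffAt ℝ 2 f z) (u : ℂ) {z : ℂ}
    (h₁ : ‖z‖ ≠ R) (h₂ : ‖z‖ ≠ R') :
    HasDerivAt (fun t : ℝ => phiRR R R' (z + t • u) * fderiv ℝ f (z + t • u) u)
      (derivPhiRRMulFDeriv R R' f u z) 0 := by
  have hline : HasDerivAt (fun t : ℝ => z + t • u) u 0 := by
    simpa using ((hasDerivAt_id (0 : ℝ)).smul_const u).const_add z
  rcases h₂.lt_or_gt with h₂ | h₂
  · have hfu := ((hf z (mem_closedBall_zero_iff.2 h₂.le)).fderiv_apply one_add_one_eq_two.le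
      u).differentiableAt one_ne_zero
    have := ((hasFDerivAt_phiRR hR hRR' h₁ h₂.ne).mul hfu.hasFDerivAt).comp_hasDerivAt_of_eq 0
      hline (by simp)
    refine this.congr_deriv ?_
    simp only [derivPhiRRMulFDeriv, add_apply, smul_apply, smul_eq_mul, coe_innerSL_apply]
    ring
  · rw [derivPhiRRMulFDeriv_of_le_norm hRR' u h₂.le]
    refine (hasDerivAt_const (0 : ℝ) (0 : ℝ)).congr_of_eventuallyEq ?_
    filter_upwards [hline.continuousAt.preimage_mem_nhds
      ((isOpen_lt continuous_const continuous_norm).mem_nhds (by simpa using h₂))] with t ht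
    rw [phiRR_of_le_norm hRR' (le_of_lt ht), zero_mul]

theorem integral_derivPhiRRMulFDeriv (hR : 0 < R) (hRR' : R < R')
    (hf : ∀ z ∈ closedBall (0 : ℂ) R', ContDiffAt ℝ 2 f z) {u : ℂ} (hu : ‖u‖ = 1) :
    ∫ z, derivPhiRRMulFDeriv R R' f u z = 0 := by
  have hu₀ : u ≠ 0 := norm_ne_zero_iff.1 (hu ▸ one_ne_zero)
  refine Complex.integral_eq_zero_of_hasDerivAt_add_smul hu (S := {z | ‖z‖ = R ∨ ‖z‖ = R'})
    (P := fun z => phiRR R R' z * fderiv ℝ f z u) (P' := derivPhiRRMulFDeriv R R' f u)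
    (fun z => ((finite_setOf_norm_add_smul_eq z hu₀ R).union
      (finite_setOf_norm_add_smul_eq z hu₀ R')).countable)
    (continuous_phiRR_mul hR hRR' fun _ hz =>
      ((hf _ hz).fderiv_apply one_add_one_eq_two.le u).continuousAt)
    (hasCompactSupport_phiRR hRR').mul_right
    (hasCompactSupport_derivPhiRRMulFDeriv hRR' u)
    (integrable_derivPhiRRMulFDeriv hR hRR' hf u) fun z hz => ?_
  rw [mem_ofPred_eq, not_or] at hz
  exact hasDerivAt_phiRR_mul_fderiv hR hRR' hf u hz.1 hz.2

end Directional

section Laplacian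

variable {R R' : ℝ} {f : ℂ → ℝ}

theorem integral_phiRR_mul_lap (hR : 0 < R) (hRR' : R < R')
    (hf : ∀ z ∈ closedBall (0 : ℂ) R', ContDiffAt ℝ 2 f z) :
    ∫ z, phiRR R R' z * lap f z = -∫ z, fderiv ℝ f z (gradPhiRR R R' z) := by
  have hsplit : ∀ z, fderiv ℝ f z (gradPhiRR R R' z) =
      ⟪gradPhiRR R R' z, 1⟫ * fderiv ℝ f z 1 + ⟪gradPhiRR R R' z, I⟫ * fderiv ℝ f z I :=
    fun z => (Complex.inner_one_mul_add_inner_I_mul _ _).symm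
  have hW : Integrable fun z => fderiv ℝ f z (gradPhiRR R R' z) := by
    simp_rw [hsplit]
    exact (integrable_inner_gradPhiRR_mul hR hRR' 1 (continuousOn_fderiv_apply hf 1)).add
      (integrable_inner_gradPhiRR_mul hR hRR' I (continuousOn_fderiv_apply hf I))
  have hpt : (fun z => phiRR R R' z * lap f z) = fun z => derivPhiRRMulFDeriv R R' f 1 z +
      derivPhiRRMulFDeriv R R' f I z - fderiv ℝ f z (gradPhiRR R R' z) := by
    ext z
    rw [hsplit, derivPhiRRMulFDeriv, derivPhiRRMulFDeriv, lap]
    ring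
  rw [hpt, integral_sub (f := fun z => derivPhiRRMulFDeriv R R' f 1 z +
      derivPhiRRMulFDeriv R R' f I z) ((integrable_derivPhiRRMulFDeriv hR hRR' hf 1).add
      (integrable_derivPhiRRMulFDeriv hR hRR' hf I)) hW,
    integral_add (integrable_derivPhiRRMulFDeriv hR hRR' hf 1)
      (integrable_derivPhiRRMulFDeriv hR hRR' hf I),
    integral_derivPhiRRMulFDeriv hR hRR' hf norm_one,
    integral_derivPhiRRMulFDeriv hR hRR' hf norm_I, zero_add, zero_sub]

end Laplacian

section Polar

variable {R R' : ℝ} {f : ℂ → ℝ}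

theorem continuousAt_fderiv_polar (hf : ∀ z ∈ closedBall (0 : ℂ) R', ContDiffAt ℝ 1 f z)
    {r : ℝ} (hr₀ : 0 ≤ r) (hr : r ≤ R') (θ : ℝ) :
    ContinuousAt (fun q : ℝ × ℝ => fderiv ℝ f (q.1 * exp (q.2 * I)) (exp (q.2 * I))) (r, θ) := by
  have hz := mem_closedBall_zero_iff.2 ((norm_ofReal_mul_exp_mul_I hr₀ θ).trans_le hr)
  exact (ContinuousAt.comp (f := fun q : ℝ × ℝ => (q.1 : ℂ) * exp (q.2 * I))
    ((hf _ hz).continuousAt_fderiv one_ne_zero) (by fun_prop)).clm_apply (by fun_prop)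

theorem integral_Ioo_fderiv_polar (hR : 0 ≤ R) (hRR' : R ≤ R')
    (hf : ∀ z ∈ closedBall (0 : ℂ) R', ContDiffAt ℝ 1 f z) (θ : ℝ) :
    ∫ r in Ioo R R', fderiv ℝ f (r * exp (θ * I)) (exp (θ * I)) =
      f (R' * exp (θ * I)) - f (R * exp (θ * I)) := by
  rw [← integral_Ioc_eq_integral_Ioo, ← intervalIntegral.integral_of_le hRR']
  refine intervalIntegral.integral_eq_sub_of_hasDerivAt (f := fun r : ℝ => f (r * exp (θ * I)))
    (fun r hr => ?_) (ContinuousOn.intervalIntegrable fun r hr => ?_) <;>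
    rw [uIcc_of_le hRR'] at hr
  · have hray : HasDerivAt (fun t : ℝ => (t : ℂ) * exp (θ * I)) (exp (θ * I)) r := by
      simpa using (hasDerivAt_id r).ofReal_comp.mul_const (exp (θ * I))
    have hr' := mem_closedBall_zero_iff.2
      ((norm_ofReal_mul_exp_mul_I (hR.trans hr.1) θ).trans_le hr.2)
    exact ((hf _ hr').differentiableAt one_ne_zero).hasFDerivAt.comp_hasDerivAt r hray
  · exact ((continuousAt_fderiv_polar hf (hR.trans hr.1) hr.2 θ).comp
      (f := fun t : ℝ => (t, θ)) (by fun_prop)).continuousWithinAt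

theorem smul_fderiv_gradPhiRR_polar (f : ℂ → ℝ) {r : ℝ} (hr : 0 < r) (θ : ℝ) :
    r • fderiv ℝ f (r * exp (θ * I)) (gradPhiRR R R' (r * exp (θ * I))) =
      (Ioo R R').indicator (fun s =>
        -(1 / Real.log (R' / R)) * fderiv ℝ f (s * exp (θ * I)) (exp (θ * I))) r := by
  by_cases h : r ∈ Ioo R R'
  · rw [indicator_of_mem h, gradPhiRR, if_pos (by rwa [norm_ofReal_mul_exp_mul_I hr.le]),
      norm_ofReal_mul_exp_mul_I hr.le, ← real_smul, smul_smul, map_smul, smul_eq_mul,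
      smul_eq_mul]
    field_simp
  · rw [indicator_of_notMem h, gradPhiRR, if_neg (by rwa [norm_ofReal_mul_exp_mul_I hr.le]),
      map_zero, smul_zero]

theorem integral_fderiv_gradPhiRR (hR : 0 < R) (hRR' : R < R')
    (hf : ∀ z ∈ closedBall (0 : ℂ) R', ContDiffAt ℝ 1 f z) :
    ∫ z, fderiv ℝ f z (gradPhiRR R R' z) = -(1 / Real.log (R' / R)) *
      ∫ θ in Ioo (-π) π, (f (R' * exp (θ * I)) - f (R * exp (θ * I))) := by
  set W : ℂ → ℝ := fun z => fderiv ℝ f z (gradPhiRR R R' z)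
  set H : ℝ × ℝ → ℝ := fun p =>
    -(1 / Real.log (R' / R)) * fderiv ℝ f (p.1 * exp (p.2 * I)) (exp (p.2 * I))
  have hpolar : ∀ p : ℝ × ℝ, 0 < p.1 → p.1 • W (Complex.polarCoord.symm p) =
      (Ioo R R').indicator (fun r => H (r, p.2)) p.1 := fun p hp => by
    rw [Complex.polarCoord_symm_apply, ofReal_cos, ofReal_sin, ← exp_mul_I]
    exact smul_fderiv_gradPhiRR_polar f hp p.2
  have hH : IntegrableOn H (Ioo R R' ×ˢ Ioo (-π) π) :=
    (ContinuousOn.integrableOn_compact (isCompact_Icc.prod isCompact_Icc) (continuousOn_const.mul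
      (continuousOn_of_forall_continuousAt fun p hp =>
        continuousAt_fderiv_polar hf (hR.le.trans hp.1.1) hp.1.2 p.2))).mono_set
      (prod_mono Ioo_subset_Icc_self (Ioo_subset_Icc_self (a := -π) (b := π)))
  calc ∫ z, W z = ∫ p in polarCoord.target, p.1 • W (Complex.polarCoord.symm p) :=
        (Complex.integral_comp_polarCoord_symm W).symm
    _ = ∫ p in Ioo R R' ×ˢ Ioo (-π) π, p.1 • W (Complex.polarCoord.symm p) := by
        rw [polarCoord_target]
        refine setIntegral_eq_of_subset_of_forall_sdiff_eq_zero
          (measurableSet_Ioi.prod measurableSet_Ioo)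
          (prod_mono (fun r hr => hR.trans hr.1) subset_rfl) fun p ⟨hp, hpbox⟩ => ?_
        rw [hpolar p hp.1]
        exact indicator_of_notMem (fun h => hpbox ⟨h, hp.2⟩) _
    _ = ∫ p in Ioo R R' ×ˢ Ioo (-π) π, H p := by
        refine setIntegral_congr_fun (measurableSet_Ioo.prod measurableSet_Ioo) fun p hp => ?_
        rw [hpolar p (hR.trans hp.1.1), indicator_of_mem hp.1]
    _ = ∫ θ in Ioo (-π) π, ∫ r in Ioo R R', H (r, θ) := by
        rw [Measure.volume_eq_prod, ← Measure.prod_restrict, integral_prod_symm]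
        rwa [Measure.prod_restrict, ← Measure.volume_eq_prod]
    _ = _ := by
        simp_rw [H, integral_const_mul, integral_Ioo_fderiv_polar hR.le hRR'.le hf]

end Polar

theorem abs_integral_phi_lap_le_general (R R' : ℝ) (hR : 0 < R) (hRR' : R < R') (hR' : R' < 1)
    (A : ℝ) (hA : A = 1 / Real.log (R' / R))
    (f : ℂ → ℝ) (U : Set ℂ) (hU : IsOpen U) (hUsub : Metric.closedBall (0 : ℂ) R' ⊆ U)
    (hf : ContDiffOn ℝ 2 f U)
    (C : ℝ) (hfC : ∀ z : ℂ, ‖z‖ ≤ R' → |f z| ≤ C) :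
    |∫ z in Metric.ball (0 : ℂ) 1, phiRR R R' z * lap f z ∂volume| ≤
      4 * Real.pi * A * C := by
  have hf₂ : ∀ z ∈ closedBall (0 : ℂ) R', ContDiffAt ℝ 2 f z :=
    fun z hz => hf.contDiffAt (hU.mem_nhds (hUsub hz))
  have hA₀ : 0 < A := hA ▸ one_div_pos.2 (Real.log_pos ((one_lt_div hR).2 hRR'))
  have hball : ∫ z in ball (0 : ℂ) 1, phiRR R R' z * lap f z = ∫ z, phiRR R R' z * lap f z :=
    setIntegral_eq_integral_of_forall_compl_eq_zero fun z hz => by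
      rw [phiRR_of_le_norm hRR' (hR'.le.trans (by simpa using hz)), zero_mul]
  have hcircle : ∀ θ ∈ Ioo (-π) π, ‖f (R' * exp (θ * I)) - f (R * exp (θ * I))‖ ≤ 2 * C := by
    intro θ _
    refine (norm_sub_le _ _).trans ?_
    rw [two_mul]
    exact add_le_add (hfC _ (norm_ofReal_mul_exp_mul_I (hR.trans hRR').le θ).le)
      (hfC _ ((norm_ofReal_mul_exp_mul_I hR.le θ).trans_le hRR'.le))
  rw [hball, integral_phiRR_mul_lap hR hRR' hf₂,
    integral_fderiv_gradPhiRR hR hRR' fun z hz => (hf₂ z hz).of_le one_le_two, ← hA, neg_mul,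
    neg_neg, abs_mul, abs_of_pos hA₀]
  calc A * |∫ θ in Ioo (-π) π, (f (R' * exp (θ * I)) - f (R * exp (θ * I)))|
      ≤ A * (2 * C * volume.real (Ioo (-π) π)) := by
        gcongr
        exact norm_setIntegral_le_of_norm_le_const (by simp) hcircle
    _ = 4 * π * A * C := by
        rw [Real.volume_real_Ioo_of_le (by linarith [Real.pi_pos])]
        ring

theorem abs_integral_phi_lap_le (R R' : ℝ) (hR : 0 < R) (hRR' : R < R') (hR' : R' < 1)
    (A : ℝ) (hA : A = 1 / Real.log (R' / R))
    (f : ℂ → ℝ) (U : Set ℂ) (hU : IsOpen U) (hUsub : Metric.closedBall (0 : ℂ) R' ⊆ U)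
    (hf : ContDiffOn ℝ 2 f U)
    (C : ℝ) (hC : 0 ≤ C) (hfC : ∀ z : ℂ, ‖z‖ ≤ R' → |f z| ≤ C) :
    |∫ z in Metric.ball (0 : ℂ) 1, phiRR R R' z * lap f z ∂volume| ≤
      4 * Real.pi * A * C :=
  abs_integral_phi_lap_le_general R R' hR hRR' hR' A hA f U hU hUsub hf C hfC
end
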